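/- arXiv:1401.7023 — 2 statements merged into one kernel-verified Lean document; each statement's English description precedes it below -/
import Mathlib

section
/- Let δ ≥ 1, and let Δ be an h-transverse polygon of height M whose width sequence β(Δ) = (β_0(Δ),…,β_M(Δ)) is nonconstant and all of whose extremal edges have length at least δ. Let β = (β_0,…,β_M) ∈ ℤ_{≥0}^{M+1} satisfy β_i = β_i(Δ) for all i with i ≤ δ or i ≥ M−δ, and β_i ≥ δ for δ < i < M−δ. Let Γ be a template of length ℓ and cogenus δ. Then for every k ≥ 0 such that δ + ε_1(Γ) ≤ ℓ − 1 + k and k ≤ M − δ − ε_0(Γ), the shifted graph Γ_{(k)} is both β-semiallowable and β(Δ)-semiallowable. If moreover d^t ≥ δ (resp. d^b ≥ δ), then Γ_{(k)} is β-semiallowable and β(Δ)-semiallowable whenever 0 ≤ k ≤ M − δ − ε_0(Γ) (resp. whenever δ + ε_1(Γ) ≤ ℓ − 1 + k ≤ M). -/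
open scoped Classical

/-- A long-edge graph: a finite multiset of weighted edges `(i, (j, ρ))` (an edge from `i`
to `j` of weight `ρ`) on the vertex set `ℕ`, with `i < j`, `ρ ≥ 1`, and no edge of
weight `1` connecting consecutive vertices. -/
structure LongEdgeGraph where
  edges : Multiset (ℕ × ℕ × ℕ)
  valid : ∀ e ∈ edges, e.1 < e.2.1 ∧ 1 ≤ e.2.2 ∧ ¬(e.2.1 = e.1 + 1 ∧ e.2.2 = 1)

namespace LongEdgeGraph

/-- The cogenus `δ(G) = ∑_e (ℓ(e)·ρ(e) − 1)`, where `ℓ(e)` is the length of `e`. -/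
def cogenus (G : LongEdgeGraph) : ℕ :=
  (G.edges.map fun e => (e.2.1 - e.1) * e.2.2 - 1).sum

/-- The multiplicity `μ(G) = ∏_e ρ(e)^2`. -/
def mult (G : LongEdgeGraph) : ℕ :=
  (G.edges.map fun e => e.2.2 ^ 2).prod

/-- `λ_j(G)`: the sum of the weights of the edges from `i` to `k` with `i < j ≤ k`. -/
def lam (G : LongEdgeGraph) (j : ℕ) : ℕ :=
  ((G.edges.filter fun e => e.1 < j ∧ j ≤ e.2.1).map fun e => e.2.2).sum

/-- `λ̄_j(G) = λ_j(G)` minus the number of edges of `G` from `j−1` to `j`. -/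
def lambar (G : LongEdgeGraph) (j : ℕ) : ℕ :=
  G.lam j - Multiset.card (G.edges.filter fun e => e.1 + 1 = j ∧ e.2.1 = j)

/-- The set of vertices of `G` with nonzero degree. -/
def verts (G : LongEdgeGraph) : Set ℕ :=
  {v | ∃ e ∈ G.edges, e.1 = v ∨ e.2.1 = v}

/-- `minv(G)`: the smallest vertex of `G` with nonzero degree. -/
noncomputable def minv (G : LongEdgeGraph) : ℕ := sInf G.verts

/-- `maxv(G)`: the largest vertex of `G` with nonzero degree. -/
noncomputable def maxv (G : LongEdgeGraph) : ℕ := sSup G.verts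

/-- The length `ℓ(G) = maxv(G) − minv(G)`. -/
noncomputable def lengthG (G : LongEdgeGraph) : ℕ := G.maxv - G.minv

/-- `ε_0(G)`: `1` if every edge incident to `minv(G)` has weight `1`, and `0` otherwise. -/
noncomputable def eps0 (G : LongEdgeGraph) : ℕ :=
  if ∀ e ∈ G.edges, (e.1 = G.minv ∨ e.2.1 = G.minv) → e.2.2 = 1 then 1 else 0

/-- `ε_1(G)`: `1` if every edge incident to `maxv(G)` has weight `1`, and `0` otherwise. -/
noncomputable def eps1 (G : LongEdgeGraph) : ℕ :=
  if ∀ e ∈ G.edges, (e.1 = G.maxv ∨ e.2.1 = G.maxv) → e.2.2 = 1 then 1 else 0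

/-- A template: `minv(Γ) = 0` and every vertex `i` with `1 ≤ i ≤ ℓ(Γ) − 1` is strictly
covered by some edge from `j` to `k` with `j < i < k`. -/
def IsTemplate (G : LongEdgeGraph) : Prop :=
  G.minv = 0 ∧ ∀ i, 1 ≤ i → i + 1 ≤ G.lengthG → ∃ e ∈ G.edges, e.1 < i ∧ i < e.2.1

/-- The shift `G_{(k)}` of a long-edge graph: every edge is moved `k` units to the right. -/
def shiftG (G : LongEdgeGraph) (k : ℕ) : LongEdgeGraph where
  edges := G.edges.map fun e => (e.1 + k, e.2.1 + k, e.2.2)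
  valid := by
    intro e he
    rw [Multiset.mem_map] at he
    obtain ⟨a, ha, rfl⟩ := he
    obtain ⟨h1, h2, h3⟩ := G.valid a ha
    dsimp only
    refine ⟨by omega, h2, ?_⟩
    rintro ⟨hc1, hc2⟩
    exact h3 ⟨by omega, hc2⟩

end LongEdgeGraph

/-- An h-transverse polygon (up to lattice translation), encoded by its height `M ≥ 1`, its
top and bottom widths `d^t` and `d^b`, and its left and right direction sequences `l, r`
(0-indexed: `l i`, resp. `r i`, is the slope of the normal vector on the left, resp. right,
side at half-integer height between levels `i` and `i+1`, read from top to bottom, for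
`0 ≤ i < M`).  The right directions are nonincreasing and the left ones nondecreasing, the
widths at interior heights are positive, and the total width change matches `d^b`. -/
structure HTransverse where
  M : ℕ
  M_pos : 0 < M
  dt : ℕ
  db : ℕ
  l : ℕ → ℤ
  r : ℕ → ℤ
  r_antitone : ∀ ⦃i j : ℕ⦄, i ≤ j → j < M → r j ≤ r i
  l_monotone : ∀ ⦃i j : ℕ⦄, i ≤ j → j < M → l i ≤ l j
  width_pos : ∀ i : ℕ, 0 < i → i < M → 0 < (dt : ℤ) + ∑ j ∈ Finset.range i, (r j - l j)
  width_closes : (dt : ℤ) + ∑ j ∈ Finset.range M, (r j - l j) = (db : ℤ)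

/-- The partial-sum sequence `β(d^t, r − l)`:
`β_i = d^t + ∑_{j<i} (r_j − l_j)` for `0 ≤ i ≤ M`. -/
def betaOf (dt : ℤ) (l r : ℕ → ℤ) (i : ℕ) : ℤ :=
  dt + ∑ j ∈ Finset.range i, (r j - l j)

namespace HTransverse

/-- The width sequence `β(Δ)` of the polygon: the widths at integer heights, top to bottom. -/
def beta (P : HTransverse) (i : ℕ) : ℤ := betaOf (P.dt : ℤ) P.l P.r i

/-- There is a vertex of `Δ` on the right side at level `N`, `0 < N < M` (an internal vertex
of the right boundary): the right direction changes there. -/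
def IsRightVertex (P : HTransverse) (N : ℕ) : Prop :=
  0 < N ∧ N < P.M ∧ P.r (N - 1) ≠ P.r N

/-- There is a vertex of `Δ` on the left side at level `N`, `0 < N < M`. -/
def IsLeftVertex (P : HTransverse) (N : ℕ) : Prop :=
  0 < N ∧ N < P.M ∧ P.l (N - 1) ≠ P.l N

/-- There is an internal vertex of `Δ` at level `N` (on either side). -/
def IsInternalVertex (P : HTransverse) (N : ℕ) : Prop :=
  P.IsRightVertex N ∨ P.IsLeftVertex N

/-- Every extremal edge of `Δ` has (lattice) length at least `E`: every internal vertex is at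
level at least `E` from the top and at least `E` from the bottom. -/
def ExtremalGE (P : HTransverse) (E : ℤ) : Prop :=
  ∀ N, P.IsInternalVertex N → E ≤ (N : ℤ) ∧ (N : ℤ) + E ≤ (P.M : ℤ)

/-- Every internal edge of `Δ` has (lattice) length at least `E`: internal vertices on the
same side are at least `E` levels apart. -/
def InternalGE (P : HTransverse) (E : ℤ) : Prop :=
  (∀ N N', P.IsRightVertex N → P.IsRightVertex N' → N < N' → (N : ℤ) + E ≤ (N' : ℤ)) ∧
  (∀ N N', P.IsLeftVertex N → P.IsLeftVertex N' → N < N' → (N : ℤ) + E ≤ (N' : ℤ))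

end HTransverse

/-- `s` is a rearrangement of the first `M` entries of `s0`. -/
def IsRearrangement (M : ℕ) (s0 s : ℕ → ℤ) : Prop :=
  ∃ σ : Equiv.Perm (Fin M), ∀ i : Fin M, s (i : ℕ) = s0 ((σ i : ℕ))

/-- The cogenus `δ(l, r)` of a pair of integer sequences of length `M` (0-indexed):
`δ(l,r) = ∑_{(i,j) ∈ Rev(r)} (r_j − r_i) + ∑_{(i,j) ∈ Rev(−l)} (l_i − l_j)`. -/
def cogenusLR (M : ℕ) (l r : ℕ → ℤ) : ℤ :=
  (∑ p ∈ (Finset.range M ×ˢ Finset.range M).filter (fun p => p.1 < p.2 ∧ r p.1 < r p.2),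
      (r p.2 - r p.1)) +
  (∑ p ∈ (Finset.range M ×ˢ Finset.range M).filter (fun p => p.1 < p.2 ∧ l p.2 < l p.1),
      (l p.1 - l p.2))

open LongEdgeGraph

/-- `G` is `β`-semiallowable for an integer-valued sequence `β = (β_0, …, β_M)`:
`maxv(G) ≤ M + 1` and `β_{j−1} ≥ λ̄_j(G)` for each `j`. -/
def SemiallowableZ (M : ℕ) (β : ℕ → ℤ) (G : LongEdgeGraph) : Prop :=
  G.maxv ≤ M + 1 ∧ ∀ j, 1 ≤ j → j ≤ M + 1 → (G.lambar j : ℤ) ≤ β (j - 1)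

/-! For `1 ≤ t ≤ ℓ`, a template `Γ` of cogenus `δ` satisfies `λ̄_t ≤ δ`,
`λ̄_t + (t - 1) ≤ δ + ε_0` and `λ̄_t + (ℓ - t) ≤ δ + ε_1`: an edge of length `L` and weight `ρ`
costs `Lρ - 1`, which pays for its share of `λ̄_t` and, up to one unit, for the vertices it
covers, and every vertex strictly between `0` and `ℓ` is covered. Since
`λ̄_j(Γ_{(k)}) = λ̄_{j-k}(Γ)`, the conditions on `k` turn these into
`λ̄_{i+1}(Γ_{(k)}) ≤ min(δ, d^t + i, d^b + M - i)`. This minimum bounds `β_i(Δ)` from below: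
`β(Δ)` is concave, linear on `[0, δ]` and on `[M - δ, M]` because extremal edges are long, and
not flat at both ends because it is nonconstant. Where `β` differs from `β(Δ)` it is at least
`δ ≥ λ̄`. -/

lemma Multiset.card_filter_eq_sum_map_ite {α : Type*} (p : α → Prop) [DecidablePred p]
    (s : Multiset α) :
    Multiset.card (s.filter p) = (s.map fun a => if p a then 1 else 0).sum := by
  induction s using Multiset.induction with
  | empty => simp
  | cons a s ih => by_cases h : p a <;> simp [h, ih, add_comm]

lemma sub_one_sub_le_sum_of_covers (S : Multiset (ℕ × ℕ × ℕ)) (a b : ℕ)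
    (hcov : ∀ v, a < v → v < b → ∃ e ∈ S, e.1 < v ∧ v < e.2.1) :
    b - 1 - a ≤ (S.map fun e => e.2.1 - e.1 - 1).sum := by
  induction S using Multiset.strongInductionOn generalizing a with
  | _ S ih =>
    by_cases hab : b ≤ a + 1
    · omega
    obtain ⟨e, he, hea, hae⟩ := hcov (a + 1) (by omega) (by omega)
    have hrest := ih (S.erase e) (Multiset.erase_lt.2 he) (e.2.1 - 1) fun v hv hvb => by
      obtain ⟨f, hf, hfv, hvf⟩ := hcov v (by omega) hvb
      exact ⟨f, (Multiset.mem_erase_of_ne (by rintro rfl; omega)).2 hf, hfv, hvf⟩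
    rw [← Multiset.cons_erase he, Multiset.map_cons, Multiset.sum_cons]
    omega

lemma eq_of_forall_succ_eq {α : Type*} {f : ℕ → α} {a b : ℕ} (hab : a ≤ b)
    (h : ∀ n, a ≤ n → n < b → f (n + 1) = f n) : f b = f a := by
  induction b, hab using Nat.le_induction with
  | base => rfl
  | succ n han ih => rw [h n han (by omega), ih fun m ham hmn => h m ham (by omega)]

namespace LongEdgeGraph

def edgeCost (e : ℕ × ℕ × ℕ) : ℕ := (e.2.1 - e.1) * e.2.2 - 1

def lambarTerm (j : ℕ) (e : ℕ × ℕ × ℕ) : ℕ :=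
  e.2.2 - if e.1 + 1 = j ∧ e.2.1 = j then 1 else 0

variable {G : LongEdgeGraph} {e : ℕ × ℕ × ℕ} {j : ℕ}

lemma lambarTerm_le_edgeCost (he : e ∈ G.edges) (hj : e.1 < j ∧ j ≤ e.2.1) :
    lambarTerm j e ≤ edgeCost e := by
  obtain ⟨-, hρ, -⟩ := G.valid e he
  unfold lambarTerm edgeCost
  split_ifs with hshort
  · rw [show e.2.1 - e.1 = 1 by omega, one_mul]
  · have : 2 * e.2.2 ≤ (e.2.1 - e.1) * e.2.2 := Nat.mul_le_mul_right _ (by omega)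
    omega

lemma lambarTerm_add_le_edgeCost (he : e ∈ G.edges) (hj : e.1 < j ∧ j ≤ e.2.1) :
    lambarTerm j e + (e.2.1 - e.1 - 1) ≤ edgeCost e + if e.2.2 = 1 then 1 else 0 := by
  have hρ := (G.valid e he).2.1
  unfold lambarTerm edgeCost
  split_ifs with hshort hρ1 hρ1
  · rw [show e.2.1 - e.1 = 1 by omega]; omega
  · rw [show e.2.1 - e.1 = 1 by omega]; omega
  · rw [hρ1, mul_one]; omega
  · have := Nat.add_le_mul (show 2 ≤ e.2.1 - e.1 by omega) (show 2 ≤ e.2.2 by omega)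
    omega

lemma sub_one_add_le_edgeCost (he : e ∈ G.edges) :
    (e.2.1 - e.1 - 1) + (if e.2.2 = 1 then 0 else 1) ≤ edgeCost e := by
  obtain ⟨hlt, hρ, -⟩ := G.valid e he
  unfold edgeCost
  split_ifs with hρ1
  · rw [hρ1, mul_one]; omega
  · have : 2 * (e.2.1 - e.1) ≤ (e.2.1 - e.1) * e.2.2 := by
      rw [mul_comm]; exact Nat.mul_le_mul_left _ (by omega)
    omega

lemma cogenus_eq_sum (G : LongEdgeGraph) : G.cogenus = (G.edges.map edgeCost).sum := rfl

lemma lambar_eq_sum (G : LongEdgeGraph) (j : ℕ) :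
    G.lambar j = ((G.edges.filter fun e => e.1 < j ∧ j ≤ e.2.1).map (lambarTerm j)).sum := by
  have hshort : (G.edges.filter fun e => e.1 + 1 = j ∧ e.2.1 = j) =
      (G.edges.filter fun e => e.1 < j ∧ j ≤ e.2.1).filter fun e => e.1 + 1 = j ∧ e.2.1 = j := by
    rw [Multiset.filter_filter]
    exact Multiset.filter_congr fun e _ => by omega
  unfold lambarTerm
  rw [lambar, lam, hshort, Multiset.card_filter_eq_sum_map_ite, Multiset.sum_map_tsub]
  intro e he
  have := (G.valid e (Multiset.mem_of_mem_filter he)).2.1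
  split_ifs <;> omega

lemma cogenus_eq_add (G : LongEdgeGraph) (j : ℕ) :
    G.cogenus = ((G.edges.filter fun e => e.1 < j ∧ j ≤ e.2.1).map edgeCost).sum +
      ((G.edges.filter fun e => ¬(e.1 < j ∧ j ≤ e.2.1)).map edgeCost).sum := by
  rw [cogenus_eq_sum, ← Multiset.sum_add, ← Multiset.map_add, Multiset.filter_add_not]

lemma lambar_le_cogenus (G : LongEdgeGraph) (j : ℕ) : G.lambar j ≤ G.cogenus := by
  have hle :
      G.lambar j ≤ ((G.edges.filter fun e => e.1 < j ∧ j ≤ e.2.1).map edgeCost).sum := by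
    rw [lambar_eq_sum]
    exact Multiset.sum_map_le_sum_map _ _ fun e he =>
      lambarTerm_le_edgeCost (Multiset.mem_of_mem_filter he) (Multiset.mem_filter.1 he).2
  rw [G.cogenus_eq_add j]
  omega

/- Each edge covering `j` pays for its term of `λ̄_j`; `e₀` also pays for its interior vertices
except for one unit, which is saved when it is heavy; the edges avoiding `j` pay for the vertices
in `(a, b)`, and a heavy one among them for one more unit. -/
lemma lambar_add_le_of_covers {e₀ : ℕ × ℕ × ℕ} (he₀ : e₀ ∈ G.edges)
    (hj₀ : e₀.1 < j ∧ j ≤ e₀.2.1) {a b : ℕ} (hcov : ∀ v, a < v → v < b →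
      ∃ f ∈ G.edges, f.1 < v ∧ v < f.2.1 ∧ ¬(f.1 < j ∧ j ≤ f.2.1))
    {ε : ℕ} (hε : 1 ≤ ε ∨ e₀.2.2 ≠ 1 ∨ ∃ h ∈ G.edges, h.2.2 ≠ 1 ∧ ¬(h.1 < j ∧ j ≤ h.2.1)) :
    G.lambar j + (b - 1 - a) + (e₀.2.1 - e₀.1 - 1) ≤ G.cogenus + ε := by
  have hsplit := G.cogenus_eq_add j
  have hlambar := G.lambar_eq_sum j
  set E := G.edges.filter fun e => e.1 < j ∧ j ≤ e.2.1
  set F := G.edges.filter fun e => ¬(e.1 < j ∧ j ≤ e.2.1)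
  have he₀E : e₀ ∈ E := Multiset.mem_filter.2 ⟨he₀, hj₀⟩
  have hE : G.lambar j + (e₀.2.1 - e₀.1 - 1) ≤
      (E.map edgeCost).sum + if e₀.2.2 = 1 then 1 else 0 := by
    have hrest : ((E.erase e₀).map (lambarTerm j)).sum ≤ ((E.erase e₀).map edgeCost).sum :=
      Multiset.sum_map_le_sum_map _ _ fun e he => by
        obtain ⟨heG, hj⟩ := Multiset.mem_filter.1 (Multiset.mem_of_mem_erase he)
        exact lambarTerm_le_edgeCost heG hj
    have h₀ := lambarTerm_add_le_edgeCost he₀ hj₀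
    rw [hlambar, ← Multiset.cons_erase he₀E]
    simp only [Multiset.map_cons, Multiset.sum_cons]
    omega
  have hF : (b - 1 - a) + (F.map fun e => if e.2.2 = 1 then 0 else 1).sum ≤
      (F.map edgeCost).sum := by
    have hlen := sub_one_sub_le_sum_of_covers F a b fun v hav hvb => by
      obtain ⟨f, hf, hfv, hvf, hfj⟩ := hcov v hav hvb
      exact ⟨f, Multiset.mem_filter.2 ⟨hf, hfj⟩, hfv, hvf⟩
    have := Multiset.sum_map_le_sum_map _ edgeCost fun e (he : e ∈ F) =>
      sub_one_add_le_edgeCost (Multiset.mem_of_mem_filter he)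
    rw [Multiset.sum_map_add] at this
    omega
  have hbonus : (if e₀.2.2 = 1 then 1 else 0) ≤
      ε + (F.map fun e => if e.2.2 = 1 then 0 else 1).sum := by
    rcases hε with hε | hρ | ⟨h, hh, hρ, hhj⟩
    · split_ifs <;> omega
    · simp [hρ]
    · have hhF : h ∈ F := Multiset.mem_filter.2 ⟨hh, hhj⟩
      have := Multiset.le_sum_of_mem
        (Multiset.mem_map_of_mem (fun e => if e.2.2 = 1 then 0 else 1) hhF)
      simp only [hρ, if_false] at this
      split_ifs <;> omega
  omega

lemma snd_le_maxv {e : ℕ × ℕ × ℕ} (he : e ∈ G.edges) : e.2.1 ≤ G.maxv := by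
  have hbdd : BddAbove G.verts := ⟨(G.edges.map fun e => e.2.1).sup, by
    rintro v ⟨f, hf, hv⟩
    have hfv := Multiset.le_sup (Multiset.mem_map_of_mem (fun e => e.2.1) hf)
    have := (G.valid f hf).1
    omega⟩
  exact le_csSup hbdd ⟨e, he, Or.inr rfl⟩

lemma lambar_eq_zero (h : ∀ e ∈ G.edges, ¬(e.1 < j ∧ j ≤ e.2.1)) : G.lambar j = 0 := by
  rw [lambar_eq_sum, Multiset.filter_eq_nil.2 h, Multiset.map_zero, Multiset.sum_zero]

lemma cogenus_shiftG (G : LongEdgeGraph) (k : ℕ) : (G.shiftG k).cogenus = G.cogenus := by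
  simp only [cogenus, shiftG, Multiset.map_map, Function.comp_def, Nat.add_sub_add_right]

lemma lambar_shiftG (G : LongEdgeGraph) (k j : ℕ) :
    (G.shiftG k).lambar j = G.lambar (j - k) := by
  simp only [lambar, lam, shiftG, Multiset.filter_map, Multiset.map_map, Multiset.card_map,
    Function.comp_def]
  congr 4 <;> funext e <;> exact propext (by omega)

lemma maxv_shiftG_le (G : LongEdgeGraph) (k : ℕ) : (G.shiftG k).maxv ≤ G.maxv + k := by
  refine csSup_le' ?_
  rintro v ⟨e, he, hv⟩
  obtain ⟨f, hf, rfl⟩ := Multiset.mem_map.1 he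
  dsimp only at hv
  have := (G.valid f hf).1
  have := snd_le_maxv hf
  omega

namespace IsTemplate

lemma lengthG_eq_maxv (hG : G.IsTemplate) : G.lengthG = G.maxv := by
  rw [lengthG, hG.1, Nat.sub_zero]

lemma filter_covers_ne_zero (hG : G.IsTemplate) (hj : 1 ≤ j) (hjm : j ≤ G.maxv) :
    (G.edges.filter fun e => e.1 < j ∧ j ≤ e.2.1) ≠ 0 := by
  suffices ∃ e ∈ G.edges, e.1 < j ∧ j ≤ e.2.1 by
    obtain ⟨e, he, hej⟩ := this
    have hmem : e ∈ G.edges.filter fun e => e.1 < j ∧ j ≤ e.2.1 := Multiset.mem_filter.2 ⟨he, hej⟩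
    exact fun h0 => by simp [h0] at hmem
  rcases hj.eq_or_lt with rfl | hj
  · have hne : G.verts.Nonempty := by
      by_contra h
      rw [Set.not_nonempty_iff_eq_empty] at h
      simp [maxv, h] at hjm
    obtain ⟨e, he, he0⟩ : G.minv ∈ G.verts := Nat.sInf_mem hne
    have := (G.valid e he).1
    exact ⟨e, he, by rw [hG.1] at he0; omega⟩
  · obtain ⟨e, he, h1, h2⟩ := hG.2 (j - 1) (by omega) (by rw [hG.lengthG_eq_maxv]; omega)
    exact ⟨e, he, by omega, by omega⟩

/- Among the edges covering `j`, take a leftmost one, preferring weight `≥ 2`: the edges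
covering the vertices to its left then avoid `j`, and if it has weight `1`, so does a heavy edge
at vertex `0` (which exists when `ε_0 = 0`). -/
lemma lambar_add_le_cogenus_add_eps0 (hG : G.IsTemplate) (hj : 1 ≤ j) (hjm : j ≤ G.maxv) :
    G.lambar j + (j - 1) ≤ G.cogenus + G.eps0 := by
  obtain ⟨e₀, he₀E, hmin⟩ := Multiset.exists_min_image
    (fun e : ℕ × ℕ × ℕ => 2 * e.1 + if e.2.2 = 1 then 1 else 0) (hG.filter_covers_ne_zero hj hjm)
  obtain ⟨he₀, hj₀⟩ := Multiset.mem_filter.1 he₀E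
  have hkey : ∀ f ∈ G.edges, f.1 < j ∧ j ≤ f.2.1 →
      2 * e₀.1 + (if e₀.2.2 = 1 then 1 else 0) ≤ 2 * f.1 + if f.2.2 = 1 then 1 else 0 :=
    fun f hf hfj => hmin f (Multiset.mem_filter.2 ⟨hf, hfj⟩)
  have hcov : ∀ v, 0 < v → v < e₀.1 + 1 →
      ∃ f ∈ G.edges, f.1 < v ∧ v < f.2.1 ∧ ¬(f.1 < j ∧ j ≤ f.2.1) := by
    intro v hv hvb
    obtain ⟨f, hf, hfv, hvf⟩ := hG.2 v hv (by rw [hG.lengthG_eq_maxv]; omega)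
    refine ⟨f, hf, hfv, hvf, fun hfj => ?_⟩
    have := hkey f hf hfj
    split_ifs at this <;> omega
  have hbonus : 1 ≤ G.eps0 ∨ e₀.2.2 ≠ 1 ∨
      ∃ h ∈ G.edges, h.2.2 ≠ 1 ∧ ¬(h.1 < j ∧ j ≤ h.2.1) := by
    unfold eps0
    split_ifs with hall
    · exact Or.inl le_rfl
    push Not at hall
    obtain ⟨h, hh, hinc, hρ⟩ := hall
    have h0 : h.1 = 0 := by
      have := (G.valid h hh).1
      rw [hG.1] at hinc
      omega
    by_cases hρ₀ : e₀.2.2 = 1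
    · refine Or.inr (Or.inr ⟨h, hh, hρ, fun hhj => ?_⟩)
      have := hkey h hh hhj
      simp only [hρ₀, hρ, h0, if_true, if_false] at this
      omega
    · exact Or.inr (Or.inl hρ₀)
  have := G.lambar_add_le_of_covers he₀ hj₀ hcov hbonus
  omega

lemma lambar_add_le_cogenus_add_eps1 (hG : G.IsTemplate) (hj : 1 ≤ j) (hjm : j ≤ G.maxv) :
    G.lambar j + (G.maxv - j) ≤ G.cogenus + G.eps1 := by
  obtain ⟨e₀, he₀E, hmax⟩ := Multiset.exists_max_image
    (fun e : ℕ × ℕ × ℕ => 2 * e.2.1 + if e.2.2 = 1 then 0 else 1) (hG.filter_covers_ne_zero hj hjm)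
  obtain ⟨he₀, hj₀⟩ := Multiset.mem_filter.1 he₀E
  have hkey : ∀ f ∈ G.edges, f.1 < j ∧ j ≤ f.2.1 →
      2 * f.2.1 + (if f.2.2 = 1 then 0 else 1) ≤ 2 * e₀.2.1 + if e₀.2.2 = 1 then 0 else 1 :=
    fun f hf hfj => hmax f (Multiset.mem_filter.2 ⟨hf, hfj⟩)
  have hcov : ∀ v, e₀.2.1 - 1 < v → v < G.maxv →
      ∃ f ∈ G.edges, f.1 < v ∧ v < f.2.1 ∧ ¬(f.1 < j ∧ j ≤ f.2.1) := by
    intro v hv hvb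
    obtain ⟨f, hf, hfv, hvf⟩ := hG.2 v (by omega) (by rw [hG.lengthG_eq_maxv]; omega)
    refine ⟨f, hf, hfv, hvf, fun hfj => ?_⟩
    have := hkey f hf hfj
    split_ifs at this <;> omega
  have hbonus : 1 ≤ G.eps1 ∨ e₀.2.2 ≠ 1 ∨
      ∃ h ∈ G.edges, h.2.2 ≠ 1 ∧ ¬(h.1 < j ∧ j ≤ h.2.1) := by
    unfold eps1
    split_ifs with hall
    · exact Or.inl le_rfl
    push Not at hall
    obtain ⟨h, hh, hinc, hρ⟩ := hall
    have hmaxv : h.2.1 = G.maxv := by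
      have := (G.valid h hh).1
      have := snd_le_maxv hh
      omega
    by_cases hρ₀ : e₀.2.2 = 1
    · refine Or.inr (Or.inr ⟨h, hh, hρ, fun hhj => ?_⟩)
      have hh₀ := hkey h hh hhj
      simp only [hρ₀, hρ, hmaxv, if_true, if_false] at hh₀
      have := snd_le_maxv he₀
      omega
    · exact Or.inr (Or.inl hρ₀)
  have := G.lambar_add_le_of_covers he₀ hj₀ hcov hbonus
  have := snd_le_maxv he₀
  omega

lemma maxv_le_cogenus_add_eps0_add_one (hG : G.IsTemplate) :
    G.maxv ≤ G.cogenus + G.eps0 + 1 := by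
  rcases Nat.eq_zero_or_pos G.maxv with h | h
  · omega
  · have := hG.lambar_add_le_cogenus_add_eps0 h le_rfl
    omega

end IsTemplate

end LongEdgeGraph

namespace HTransverse

variable {P : HTransverse} {δ : ℕ}

def slope (P : HTransverse) (j : ℕ) : ℤ := P.r j - P.l j

lemma slope_antitone {i j : ℕ} (hij : i ≤ j) (hj : j < P.M) : P.slope j ≤ P.slope i :=
  sub_le_sub (P.r_antitone hij hj) (P.l_monotone hij hj)

lemma slope_succ_eq {n : ℕ} (hv : ¬P.IsInternalVertex (n + 1)) (hn : n + 1 < P.M) :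
    P.slope (n + 1) = P.slope n := by
  simp only [IsInternalVertex, IsRightVertex, IsLeftVertex, Nat.add_sub_cancel, not_or,
    not_and, not_not] at hv
  rw [slope, slope, hv.1 n.succ_pos hn, hv.2 n.succ_pos hn]

lemma slope_eq_slope_zero (hext : P.ExtremalGE δ) {j : ℕ} (hj : j < δ) (hjM : j < P.M) :
    P.slope j = P.slope 0 :=
  eq_of_forall_succ_eq j.zero_le fun n _ hn =>
    slope_succ_eq (fun hv => by have := hext _ hv; omega) (by omega)

lemma slope_last_eq (hext : P.ExtremalGE δ) {j : ℕ} (hj : P.M ≤ j + δ) (hjM : j < P.M) :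
    P.slope (P.M - 1) = P.slope j :=
  eq_of_forall_succ_eq (by omega) fun n hn _ =>
    slope_succ_eq (fun hv => by have := hext _ hv; omega) (by omega)

lemma beta_sub_beta {a b : ℕ} (hab : a ≤ b) :
    P.beta b - P.beta a = ∑ j ∈ Finset.Ico a b, P.slope j := by
  simp only [beta, betaOf, slope, Finset.sum_Ico_eq_sub _ hab]
  ring

lemma beta_zero : P.beta 0 = P.dt := by
  simp [beta, betaOf]

lemma beta_M : P.beta P.M = P.db := P.width_closes

lemma beta_le_beta_of_slope_nonneg {a b : ℕ} (hab : a ≤ b)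
    (h : ∀ j ∈ Finset.Ico a b, 0 ≤ P.slope j) : P.beta a ≤ P.beta b := by
  have := P.beta_sub_beta hab
  have := Finset.sum_nonneg h
  omega

lemma beta_le_beta_of_slope_nonpos {a b : ℕ} (hab : a ≤ b)
    (h : ∀ j ∈ Finset.Ico a b, P.slope j ≤ 0) : P.beta b ≤ P.beta a := by
  have := P.beta_sub_beta hab
  have := Finset.sum_nonpos h
  omega

lemma min_beta_le_beta {a i b : ℕ} (hai : a ≤ i) (hib : i ≤ b) (hb : b ≤ P.M) :
    min (P.beta a) (P.beta b) ≤ P.beta i := by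
  by_cases h : ∃ j ∈ Finset.Ico a i, P.slope j < 0
  · obtain ⟨j, hj, hneg⟩ := h
    refine min_le_of_right_le (beta_le_beta_of_slope_nonpos hib fun x hx => ?_)
    rw [Finset.mem_Ico] at hj hx
    have := slope_antitone (P := P) (show j ≤ x by omega) (by omega)
    omega
  · push Not at h
    exact min_le_of_left_le (beta_le_beta_of_slope_nonneg hai h)

lemma one_le_slope_zero_or_slope_last_le_neg_one
    (hnc : ∃ i j, i ≤ P.M ∧ j ≤ P.M ∧ P.beta i ≠ P.beta j) :
    1 ≤ P.slope 0 ∨ P.slope (P.M - 1) ≤ -1 := by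
  by_contra! h
  have hconst : ∀ i ≤ P.M, P.beta i = P.beta 0 := fun i hi => by
    have hslope : ∀ x ∈ Finset.Ico 0 i, P.slope x = 0 := fun x hx => by
      rw [Finset.mem_Ico] at hx
      have := slope_antitone (P := P) (Nat.zero_le x) (by omega)
      have := slope_antitone (P := P) (show x ≤ P.M - 1 by omega) (by omega)
      omega
    have := P.beta_sub_beta (Nat.zero_le i)
    rw [Finset.sum_eq_zero hslope] at this
    omega
  obtain ⟨i, j, hi, hj, hne⟩ := hnc
  exact hne (by rw [hconst i hi, hconst j hj])

lemma dt_add_le_beta (hext : P.ExtremalGE δ) (h : 1 ≤ P.slope 0) {i : ℕ} (hiδ : i ≤ δ)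
    (hiM : i ≤ P.M) : P.dt + (i : ℤ) ≤ P.beta i := by
  have hsum := Finset.card_nsmul_le_sum (Finset.Ico 0 i) (fun j => P.slope j) 1 fun j hj => by
    rw [Finset.mem_Ico] at hj
    rw [slope_eq_slope_zero hext (by omega) (by omega)]
    exact h
  have := P.beta_sub_beta (Nat.zero_le i)
  simp only [Nat.card_Ico, Nat.sub_zero, nsmul_eq_mul, mul_one] at hsum
  rw [beta_zero] at this
  omega

lemma db_add_le_beta (hext : P.ExtremalGE δ) (h : P.slope (P.M - 1) ≤ -1) {i : ℕ}
    (hiδ : P.M ≤ i + δ) (hiM : i ≤ P.M) : P.db + ((P.M : ℤ) - i) ≤ P.beta i := by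
  have hsum := Finset.sum_le_card_nsmul (Finset.Ico i P.M) (fun j => P.slope j) (-1) fun j hj =>
    by
    rw [Finset.mem_Ico] at hj
    rw [← slope_last_eq hext (by omega) hj.2]
    exact h
  have := P.beta_sub_beta hiM
  simp only [Nat.card_Ico, nsmul_eq_mul, mul_neg, mul_one, Nat.cast_sub hiM] at hsum
  rw [beta_M] at this
  omega

lemma min_le_beta (hnc : ∃ i j, i ≤ P.M ∧ j ≤ P.M ∧ P.beta i ≠ P.beta j)
    (hext : P.ExtremalGE δ) {i : ℕ} (hi : i ≤ P.M) :
    min (δ : ℤ) (min (P.dt + (i : ℤ)) (P.db + ((P.M : ℤ) - i))) ≤ P.beta i := by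
  have hconc := P.min_beta_le_beta (min_le_left i δ) (le_max_left i (P.M - δ))
    (max_le hi (Nat.sub_le _ _))
  have htop : 1 ≤ P.slope 0 → P.dt + ((min i δ : ℕ) : ℤ) ≤ P.beta (min i δ) := fun h =>
    dt_add_le_beta hext h (min_le_right _ _) (by omega)
  have hbot : P.slope (P.M - 1) ≤ -1 →
      P.db + ((P.M : ℤ) - (max i (P.M - δ) : ℕ)) ≤ P.beta (max i (P.M - δ)) := fun h =>
    db_add_le_beta hext h (by omega) (by omega)
  have hanti : P.slope 0 ≤ 0 → P.beta (max i (P.M - δ)) ≤ P.beta (min i δ) := fun h =>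
    beta_le_beta_of_slope_nonpos (by omega) fun x hx => by
      rw [Finset.mem_Ico] at hx
      exact (slope_antitone (Nat.zero_le x) (by omega)).trans h
  have hmono : 0 ≤ P.slope (P.M - 1) → P.beta (min i δ) ≤ P.beta (max i (P.M - δ)) := fun h =>
    beta_le_beta_of_slope_nonneg (by omega) fun x hx => by
      rw [Finset.mem_Ico] at hx
      exact h.trans (slope_antitone (by omega) (by omega))
  rcases one_le_slope_zero_or_slope_last_le_neg_one hnc with h | h
  · rcases le_or_gt 0 (P.slope (P.M - 1)) with h' | h' <;> omega
  · rcases le_or_gt (P.slope 0) 0 with h' | h' <;> omega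

end HTransverse

lemma SemiallowableZ.of_forall_eq_or_cogenus_le {M c : ℕ} {β β' : ℕ → ℤ} {G : LongEdgeGraph}
    (hG : SemiallowableZ M β' G) (hc : G.cogenus ≤ c)
    (h : ∀ i ≤ M, β i = β' i ∨ (c : ℤ) ≤ β i) :
    SemiallowableZ M β G := by
  refine ⟨hG.1, fun j hj1 hjM => ?_⟩
  rcases h (j - 1) (by omega) with h | h
  · exact h ▸ hG.2 j hj1 hjM
  · have := G.lambar_le_cogenus j
    omega

section

variable {δ ℓ k : ℕ} {P : HTransverse} {Γ : LongEdgeGraph}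

lemma lambar_shiftG_le_beta (hnc : ∃ i j, i ≤ P.M ∧ j ≤ P.M ∧ P.beta i ≠ P.beta j)
    (hext : P.ExtremalGE δ) (hΓ : Γ.IsTemplate) (hmaxv : Γ.maxv = ℓ) (hcog : Γ.cogenus = δ)
    (hA : (δ : ℤ) + Γ.eps1 ≤ ℓ - 1 + k ∨ (δ : ℤ) ≤ P.dt)
    (hB : (k : ℤ) ≤ P.M - δ - Γ.eps0 ∨ (δ : ℤ) ≤ P.db) {i : ℕ} (hi : i ≤ P.M) :
    ((Γ.shiftG k).lambar (i + 1) : ℤ) ≤ P.beta i := by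
  refine le_trans ?_ (P.min_le_beta hnc hext hi)
  rw [lambar_shiftG]
  by_cases ht : 1 ≤ i + 1 - k ∧ i + 1 - k ≤ ℓ
  · have := Γ.lambar_le_cogenus (i + 1 - k)
    have := hΓ.lambar_add_le_cogenus_add_eps0 ht.1 (hmaxv ▸ ht.2)
    have := hΓ.lambar_add_le_cogenus_add_eps1 ht.1 (hmaxv ▸ ht.2)
    omega
  · rw [Γ.lambar_eq_zero fun e he hej => ?_]
    · omega
    have := (Γ.valid e he).1
    have := snd_le_maxv he
    omega

lemma semiallowable_shiftG (hnc : ∃ i j, i ≤ P.M ∧ j ≤ P.M ∧ P.beta i ≠ P.beta j)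
    (hext : P.ExtremalGE δ) {β : ℕ → ℤ} (hβ : ∀ i ≤ P.M, β i = P.beta i ∨ (δ : ℤ) ≤ β i)
    (hΓ : Γ.IsTemplate) (hmaxv : Γ.maxv = ℓ) (hcog : Γ.cogenus = δ)
    (hA : (δ : ℤ) + Γ.eps1 ≤ ℓ - 1 + k ∨ (δ : ℤ) ≤ P.dt)
    (hB : (k : ℤ) ≤ P.M - δ - Γ.eps0 ∨ (δ : ℤ) ≤ P.db) (hK : ℓ + k ≤ P.M + 1) :
    SemiallowableZ P.M β (Γ.shiftG k) ∧ SemiallowableZ P.M P.beta (Γ.shiftG k) := by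
  have hbeta : SemiallowableZ P.M P.beta (Γ.shiftG k) := by
    refine ⟨(Γ.maxv_shiftG_le k).trans (by omega), fun j hj1 hjM => ?_⟩
    obtain ⟨i, rfl⟩ : ∃ i, j = i + 1 := ⟨j - 1, by omega⟩
    exact lambar_shiftG_le_beta hnc hext hΓ hmaxv hcog hA hB (by omega)
  exact ⟨hbeta.of_forall_eq_or_cogenus_le (Γ.cogenus_shiftG k ▸ hcog.le) hβ, hbeta⟩

end

theorem shifted_template_semiallowable_general (δ : ℕ) (P : HTransverse)
    (hnc : ∃ i j, i ≤ P.M ∧ j ≤ P.M ∧ P.beta i ≠ P.beta j)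
    (hext : P.ExtremalGE (δ : ℤ))
    (β : ℕ → ℤ)
    (hβeq : ∀ i, i ≤ P.M → ((i : ℤ) ≤ (δ : ℤ) ∨ (P.M : ℤ) - (δ : ℤ) ≤ (i : ℤ)) →
      β i = P.beta i)
    (hβge : ∀ i, i ≤ P.M → (δ : ℤ) < (i : ℤ) → (i : ℤ) < (P.M : ℤ) - (δ : ℤ) →
      (δ : ℤ) ≤ β i)
    (Γ : LongEdgeGraph) (hΓ : Γ.IsTemplate) (ℓ : ℕ) (hlen : Γ.lengthG = ℓ)
    (hcog : Γ.cogenus = δ) :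
    (∀ k : ℕ, (δ : ℤ) + (Γ.eps1 : ℤ) ≤ (ℓ : ℤ) - 1 + (k : ℤ) →
        (k : ℤ) ≤ (P.M : ℤ) - (δ : ℤ) - (Γ.eps0 : ℤ) →
      SemiallowableZ P.M β (Γ.shiftG k) ∧ SemiallowableZ P.M P.beta (Γ.shiftG k)) ∧
    ((δ : ℤ) ≤ (P.dt : ℤ) →
      ∀ k : ℕ, (k : ℤ) ≤ (P.M : ℤ) - (δ : ℤ) - (Γ.eps0 : ℤ) →
      SemiallowableZ P.M β (Γ.shiftG k) ∧ SemiallowableZ P.M P.beta (Γ.shiftG k)) ∧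
    ((δ : ℤ) ≤ (P.db : ℤ) →
      ∀ k : ℕ, (δ : ℤ) + (Γ.eps1 : ℤ) ≤ (ℓ : ℤ) - 1 + (k : ℤ) →
        (ℓ : ℤ) - 1 + (k : ℤ) ≤ (P.M : ℤ) →
      SemiallowableZ P.M β (Γ.shiftG k) ∧ SemiallowableZ P.M P.beta (Γ.shiftG k)) := by
  have hmaxv : Γ.maxv = ℓ := hΓ.lengthG_eq_maxv ▸ hlen
  have hℓ := hΓ.maxv_le_cogenus_add_eps0_add_one
  have hβ : ∀ i ≤ P.M, β i = P.beta i ∨ (δ : ℤ) ≤ β i := fun i hi => by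
    by_cases hend : (i : ℤ) ≤ δ ∨ (P.M : ℤ) - δ ≤ i
    · exact Or.inl (hβeq i hi hend)
    · exact Or.inr (hβge i hi (by omega) (by omega))
  have hshift := fun k hA hB (hK : ℓ + k ≤ P.M + 1) =>
    semiallowable_shiftG (k := k) hnc hext hβ hΓ hmaxv hcog hA hB hK
  refine ⟨fun k hA hB => hshift k (.inl hA) (.inl hB) (by omega),
    fun hdt k hB => hshift k (.inr hdt) (.inl hB) (by omega),
    fun hdb k hA hK => hshift k (.inl hA) (.inr hdb) (by omega)⟩

/-- let `δ ≥ 1` and let `Δ` be an h-transverse polygon of height `M` with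
nonconstant width sequence `β(Δ)`, all of whose extremal edges have length at least `δ`.
Let `β ∈ ℤ_{≥0}^{M+1}` satisfy `β_i = β_i(Δ)` for `i ≤ δ` or `i ≥ M − δ`, and `β_i ≥ δ` for
`δ < i < M − δ`.  Let `Γ` be a template of length `ℓ` and cogenus `δ`.  Then for every
`k ≥ 0` with `δ + ε_1(Γ) ≤ ℓ − 1 + k` and `k ≤ M − δ − ε_0(Γ)`, the shift `Γ_{(k)}` is both
`β`-semiallowable and `β(Δ)`-semiallowable; if moreover `d^t ≥ δ` (resp. `d^b ≥ δ`), the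
same holds whenever `0 ≤ k ≤ M − δ − ε_0(Γ)` (resp. whenever
`δ + ε_1(Γ) ≤ ℓ − 1 + k ≤ M`). -/
theorem shifted_template_semiallowable (δ : ℕ) (hδ : 1 ≤ δ) (P : HTransverse)
    (hnc : ∃ i j, i ≤ P.M ∧ j ≤ P.M ∧ P.beta i ≠ P.beta j)
    (hext : P.ExtremalGE (δ : ℤ))
    (β : ℕ → ℤ) (hβnn : ∀ i, i ≤ P.M → 0 ≤ β i)
    (hβeq : ∀ i, i ≤ P.M → ((i : ℤ) ≤ (δ : ℤ) ∨ (P.M : ℤ) - (δ : ℤ) ≤ (i : ℤ)) →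
      β i = P.beta i)
    (hβge : ∀ i, i ≤ P.M → (δ : ℤ) < (i : ℤ) → (i : ℤ) < (P.M : ℤ) - (δ : ℤ) →
      (δ : ℤ) ≤ β i)
    (Γ : LongEdgeGraph) (hΓ : Γ.IsTemplate) (ℓ : ℕ) (hlen : Γ.lengthG = ℓ)
    (hcog : Γ.cogenus = δ) :
    (∀ k : ℕ, (δ : ℤ) + (Γ.eps1 : ℤ) ≤ (ℓ : ℤ) - 1 + (k : ℤ) →
        (k : ℤ) ≤ (P.M : ℤ) - (δ : ℤ) - (Γ.eps0 : ℤ) →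
      SemiallowableZ P.M β (Γ.shiftG k) ∧ SemiallowableZ P.M P.beta (Γ.shiftG k)) ∧
    ((δ : ℤ) ≤ (P.dt : ℤ) →
      ∀ k : ℕ, (k : ℤ) ≤ (P.M : ℤ) - (δ : ℤ) - (Γ.eps0 : ℤ) →
      SemiallowableZ P.M β (Γ.shiftG k) ∧ SemiallowableZ P.M P.beta (Γ.shiftG k)) ∧
    ((δ : ℤ) ≤ (P.db : ℤ) →
      ∀ k : ℕ, (δ : ℤ) + (Γ.eps1 : ℤ) ≤ (ℓ : ℤ) - 1 + (k : ℤ) →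
        (ℓ : ℤ) - 1 + (k : ℤ) ≤ (P.M : ℤ) →
      SemiallowableZ P.M β (Γ.shiftG k) ∧ SemiallowableZ P.M P.beta (Γ.shiftG k)) :=
  shifted_template_semiallowable_general δ P hnc hext β hβeq hβge Γ hΓ ℓ hlen hcog
end

section
/- In the ring of formal power series ℚ[[x]], the logarithm of the partition generating function satisfies log(∑_{n ≥ 0} p(n) x^n) = ∑_{n ≥ 1} (σ(n)/n) x^n, where σ(n) = ∑_{d | n} d; equivalently, log(∏_{i ≥ 1} (1 − x^i)^{−1}) = ∑_{n ≥ 1} (σ(n)/n) x^n. -/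
/-!
Logarithmic differentiation. For `f` with constant term `1`, `(log f)' * f = f'`: modulo `X ^ N`
the series `logPS f` agrees with a partial sum of `log (1 + g) = ∑ (-1)^(k+1) g^k / k`,
`g = f - 1`, whose derivative times `1 + g` telescopes to `(1 - (-g)^N) g'`.
For `P = ∑ p(n) xⁿ` it therefore suffices that `x P' = (∑ σ(n) xⁿ) P`, i.e.
`n p(n) = ∑_{k ≤ n} σ(k) p(n - k)`. Count the parts of all partitions of `n` by their size `d`:
removing `m` copies of `d` matches the partitions with at least `m` parts equal to `d` with the
partitions of `n - m d`, and the pairs `(d, m)` with `m d = k` contribute `σ(k) p(n - k)`.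
-/

open PowerSeries

/-- The formal logarithm of a power series `f` (with constant term `1`):
`log f = ∑_{k ≥ 1} (−1)^{k+1} (f − 1)^k / k`.  Since `f − 1` has positive order when the
constant term of `f` is `1`, the coefficient of `xⁿ` only receives contributions from
`k ≤ n`, which gives the coefficientwise formula below. -/
noncomputable def logPS (f : PowerSeries ℚ) : PowerSeries ℚ :=
  PowerSeries.mk fun n =>
    ∑ k ∈ Finset.Icc 1 n, ((-1 : ℚ) ^ (k + 1) / (k : ℚ)) * (PowerSeries.coeff (R := ℚ) n) ((f - 1) ^ k)

/-- The generating function `∑_{n ≥ 0} p(n) xⁿ` of the partition numbers. -/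
noncomputable def partitionGF : PowerSeries ℚ :=
  PowerSeries.mk fun n => (Fintype.card (Nat.Partition n) : ℚ)

open Finset ArithmeticFunction
open scoped ArithmeticFunction.sigma

namespace Nat.Partition

variable {n m d : ℕ}

lemma mul_le_of_le_count {l : n.Partition} (h : m ≤ l.parts.count d) : m * d ≤ n := by
  obtain ⟨u, hu⟩ := Multiset.le_iff_exists_add.1 (Multiset.le_count_iff_replicate_le.1 h)
  have := congrArg Multiset.sum hu
  rw [l.parts_sum, Multiset.sum_add, Multiset.sum_replicate, smul_eq_mul] at this
  omega

def partitionWithLeCountEquiv (hd : 0 < d) (h : m * d ≤ n) :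
    {l : n.Partition // m ≤ l.parts.count d} ≃ (n - m * d).Partition where
  toFun l :=
    have hle := Multiset.le_count_iff_replicate_le.1 l.2
    ⟨l.1.parts - .replicate m d,
      fun hi => l.1.parts_pos (Multiset.mem_of_le (Multiset.sub_le_self _ _) hi), by
      have := congrArg Multiset.sum (tsub_add_cancel_of_le hle)
      rw [Multiset.sum_add, Multiset.sum_replicate, smul_eq_mul, l.1.parts_sum] at this
      omega⟩
  invFun q := ⟨⟨q.parts + .replicate m d, by
      simp only [Multiset.mem_add, Multiset.mem_replicate]
      rintro i (hi | ⟨-, rfl⟩)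
      exacts [q.parts_pos hi, hd], by
      rw [Multiset.sum_add, Multiset.sum_replicate, smul_eq_mul, q.parts_sum]
      omega⟩,
    Multiset.le_count_iff_replicate_le.2 (Multiset.le_add_left _ _)⟩
  left_inv l := Subtype.ext <| Nat.Partition.ext <|
    tsub_add_cancel_of_le (Multiset.le_count_iff_replicate_le.1 l.2)
  right_inv q := Nat.Partition.ext (add_tsub_cancel_right _ _)

lemma card_filter_le_count (hd : 0 < d) (h : m * d ≤ n) :
    #{l : n.Partition | m ≤ l.parts.count d} = Fintype.card (n - m * d).Partition := by
  rw [← Fintype.card_subtype]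
  exact Fintype.card_congr (partitionWithLeCountEquiv hd h)

lemma sum_count_eq_sum_card (hd : 0 < d) :
    ∑ l : n.Partition, l.parts.count d =
      ∑ m ∈ Icc 1 (n / d), Fintype.card (n - m * d).Partition :=
  calc ∑ l : n.Partition, l.parts.count d
      = ∑ l : n.Partition, ∑ _m ∈ Icc 1 (l.parts.count d), 1 := by simp
    _ = ∑ m ∈ Icc 1 (n / d), ∑ _l ∈ {l : n.Partition | m ≤ l.parts.count d}, 1 := by
      refine sum_comm' fun l m => ?_
      simp only [mem_univ, mem_Icc, mem_filter, true_and, Nat.le_div_iff_mul_le hd]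
      exact ⟨fun h => ⟨h.2, h.1, mul_le_of_le_count h.2⟩, fun h => ⟨h.2.1, h.1⟩⟩
    _ = _ := sum_congr rfl fun m hm => by
      rw [sum_const, smul_eq_mul, mul_one,
        card_filter_le_count hd ((Nat.le_div_iff_mul_le hd).1 (mem_Icc.1 hm).2)]

lemma sum_count_mul (l : n.Partition) : ∑ d ∈ Icc 1 n, l.parts.count d * d = n := by
  have hsub : l.parts.toFinset ⊆ Icc 1 n := fun d hd => by
    rw [Multiset.mem_toFinset] at hd
    exact mem_Icc.2 ⟨l.parts_pos hd, le_of_mem_parts hd⟩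
  rw [← sum_subset hsub fun d _ hd => by simp [Multiset.count_eq_zero.2 (by simpa using hd)]]
  simpa [smul_eq_mul, l.parts_sum] using (Finset.sum_multiset_count l.parts).symm

end Nat.Partition

theorem Nat.sum_Icc_sum_Icc_div_eq_sum_range_sum_divisors {M : Type*} [AddCommMonoid M]
    (f : ℕ → ℕ → M) (n : ℕ) :
    ∑ d ∈ Icc 1 n, ∑ m ∈ Icc 1 (n / d), f m d =
      ∑ k ∈ range (n + 1), ∑ d ∈ k.divisors, f (k / d) d := by
  rw [sum_sigma', sum_sigma']
  refine sum_nbij' (fun x => ⟨x.2 * x.1, x.1⟩) (fun x => ⟨x.2, x.1 / x.2⟩) ?_ ?_ ?_ ?_ ?_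
  · rintro ⟨d, m⟩ hx
    simp only [mem_sigma, mem_Icc, mem_range, Nat.mem_divisors] at hx ⊢
    rw [Nat.le_div_iff_mul_le (by omega)] at hx
    exact ⟨by omega, Dvd.intro_left m rfl, Nat.mul_ne_zero (by omega) (by omega)⟩
  · rintro ⟨k, d⟩ hx
    simp only [mem_sigma, mem_range, Nat.mem_divisors] at hx
    obtain ⟨hk, ⟨m, rfl⟩, hk0⟩ := hx
    have hd : 0 < d := Nat.pos_of_ne_zero (left_ne_zero_of_mul hk0)
    simp only [mem_sigma, mem_Icc, Nat.le_div_iff_mul_le hd, Nat.mul_div_cancel_left m hd]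
    have hm : 0 < m := Nat.pos_of_ne_zero (right_ne_zero_of_mul hk0)
    exact ⟨⟨hd, by nlinarith⟩, hm, by linarith [mul_comm m d]⟩
  · rintro ⟨d, m⟩ hx
    simp only [mem_sigma, mem_Icc] at hx
    simp [Nat.mul_div_cancel m (by omega : 0 < d)]
  · rintro ⟨k, d⟩ hx
    simp only [mem_sigma, mem_range, Nat.mem_divisors] at hx
    simp [Nat.div_mul_cancel hx.2.1]
  · rintro ⟨d, m⟩ hx
    simp only [mem_sigma, mem_Icc] at hx
    simp [Nat.mul_div_cancel m (by omega : 0 < d)]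

theorem Nat.Partition.mul_card_eq_sum_sigma_mul_card (n : ℕ) :
    n * Fintype.card n.Partition =
      ∑ k ∈ range (n + 1), σ 1 k * Fintype.card (n - k).Partition :=
  calc n * Fintype.card n.Partition
      = ∑ l : n.Partition, ∑ d ∈ Icc 1 n, l.parts.count d * d := by
        rw [mul_comm]; simp only [sum_count_mul, sum_const, smul_eq_mul, Finset.card_univ]
    _ = ∑ d ∈ Icc 1 n, (∑ l : n.Partition, l.parts.count d) * d := by
        rw [sum_comm]; simp only [sum_mul]
    _ = ∑ d ∈ Icc 1 n, ∑ m ∈ Icc 1 (n / d), Fintype.card (n - m * d).Partition * d :=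
        sum_congr rfl fun d hd => by rw [sum_count_eq_sum_card (mem_Icc.1 hd).1, sum_mul]
    _ = ∑ k ∈ range (n + 1), ∑ d ∈ k.divisors, Fintype.card (n - k / d * d).Partition * d :=
        Nat.sum_Icc_sum_Icc_div_eq_sum_range_sum_divisors (fun m d => _) n
    _ = ∑ k ∈ range (n + 1), σ 1 k * Fintype.card (n - k).Partition :=
        sum_congr rfl fun k _ => by
          rw [sigma_one_apply, sum_mul]
          refine sum_congr rfl fun d hd => ?_
          rw [Nat.div_mul_cancel (Nat.dvd_of_mem_divisors hd), mul_comm]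

namespace PowerSeries

variable {R : Type*}

theorem eq_zero_of_forall_X_pow_dvd [Semiring R] {φ : R⟦X⟧}
    (h : ∀ N, (X : R⟦X⟧) ^ N ∣ φ) : φ = 0 :=
  ext fun n => by simpa using X_pow_dvd_iff.1 (h (n + 1)) n n.lt_succ_self

theorem X_pow_dvd_derivative [CommSemiring R] {φ : R⟦X⟧} {N : ℕ} (h : X ^ (N + 1) ∣ φ) :
    X ^ N ∣ d⁄dX R φ := by
  obtain ⟨ψ, rfl⟩ := h
  rw [Derivation.leibniz, derivative_pow, derivative_X, smul_eq_mul, smul_eq_mul,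
    Nat.add_sub_cancel, pow_succ]
  exact dvd_add (dvd_mul_of_dvd_left (dvd_mul_right _ _) _)
    (Dvd.intro (ψ * (N + 1 : ℕ)) (by ring))

theorem coeff_X_mul_derivative [CommSemiring R] (φ : R⟦X⟧) (n : ℕ) :
    coeff n (X * d⁄dX R φ) = n * coeff n φ := by
  cases n with
  | zero => simp
  | succ n => rw [coeff_succ_X_mul, coeff_derivative, mul_comm]; push_cast; rfl

theorem X_mul_derivative_mk_div_natCast {K : Type*} [Field K] [CharZero K] (a : ℕ → K)
    (ha : a 0 = 0) : X * d⁄dX K (mk fun n => a n / n) = mk a := by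
  ext n
  rw [coeff_X_mul_derivative, coeff_mk, coeff_mk]
  rcases eq_or_ne n 0 with rfl | hn
  · simp [ha]
  · field_simp

end PowerSeries

noncomputable def logPartialSum (g : ℚ⟦X⟧) (N : ℕ) : ℚ⟦X⟧ :=
  ∑ k ∈ Icc 1 N, ((-1 : ℚ) ^ (k + 1) / k) • g ^ k

lemma coeff_logPS (f : ℚ⟦X⟧) (n : ℕ) :
    coeff n (logPS f) = coeff n (logPartialSum (f - 1) n) := by
  simp [logPS, logPartialSum]

lemma X_pow_dvd_logPS_sub_logPartialSum {f : ℚ⟦X⟧} (hf : constantCoeff f = 1) (N : ℕ) :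
    X ^ (N + 1) ∣ logPS f - logPartialSum (f - 1) N := by
  have hX : ∀ k, X ^ k ∣ (f - 1) ^ k := pow_dvd_pow_of_dvd (X_dvd_iff.2 (by simp [hf]))
  refine X_pow_dvd_iff.2 fun n hn => ?_
  rw [map_sub, coeff_logPS, sub_eq_zero, logPartialSum, logPartialSum, map_sum, map_sum]
  refine sum_subset (Icc_subset_Icc_right (by omega)) fun k hk hkn => ?_
  rw [mem_Icc] at hk hkn
  rw [coeff_smul, X_pow_dvd_iff.1 (hX k) n (by omega), smul_zero]

lemma derivative_logPartialSum (g : ℚ⟦X⟧) (N : ℕ) :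
    d⁄dX ℚ (logPartialSum g N) = (∑ j ∈ range N, (-g) ^ j) * d⁄dX ℚ g := by
  rw [logPartialSum, map_sum, sum_mul, ← Ico_add_one_right_eq_Icc, sum_Ico_eq_sum_range]
  refine sum_congr (by simp) fun j _ => ?_
  rw [Derivation.map_smul]
  have hcoeff : (-1 : ℚ) ^ (1 + j + 1) / (1 + j : ℕ) * (1 + j : ℕ) = (-1) ^ j := by
    field_simp; ring
  calc ((-1 : ℚ) ^ (1 + j + 1) / (1 + j : ℕ)) • d⁄dX ℚ (g ^ (1 + j))
      = C ((-1 : ℚ) ^ (1 + j + 1) / (1 + j : ℕ) * (1 + j : ℕ)) * (g ^ j * d⁄dX ℚ g) := by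
        rw [derivative_pow, add_tsub_cancel_left, smul_eq_C_mul, map_mul, map_natCast]; ring
    _ = (-g) ^ j * d⁄dX ℚ g := by rw [hcoeff, map_pow, map_neg, map_one, neg_pow]; ring

lemma derivative_logPartialSum_mul (g : ℚ⟦X⟧) (N : ℕ) :
    d⁄dX ℚ (logPartialSum g N) * (1 + g) = (1 - (-g) ^ N) * d⁄dX ℚ g := by
  rw [derivative_logPartialSum, ← mul_neg_geom_sum, sub_neg_eq_add]
  ring

theorem derivative_logPS_mul {f : ℚ⟦X⟧} (hf : constantCoeff f = 1) :
    d⁄dX ℚ (logPS f) * f = d⁄dX ℚ f := by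
  refine sub_eq_zero.1 (eq_zero_of_forall_X_pow_dvd fun N => ?_)
  set g := f - 1
  have hlog : X ^ N ∣ d⁄dX ℚ (logPS f) - d⁄dX ℚ (logPartialSum g N) := by
    rw [← map_sub]; exact X_pow_dvd_derivative (X_pow_dvd_logPS_sub_logPartialSum hf N)
  have hg : X ^ N ∣ (-g) ^ N := pow_dvd_pow_of_dvd (X_dvd_iff.2 (by simp [g, hf])) N
  have hpartial := derivative_logPartialSum_mul g N
  rw [add_sub_cancel, show d⁄dX ℚ g = d⁄dX ℚ f by simp [g]] at hpartial
  have : d⁄dX ℚ (logPS f) * f - d⁄dX ℚ f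
      = (d⁄dX ℚ (logPS f) - d⁄dX ℚ (logPartialSum g N)) * f - (-g) ^ N * d⁄dX ℚ f := by
    linear_combination hpartial
  rw [this]
  exact dvd_sub (dvd_mul_of_dvd_left hlog _) (dvd_mul_of_dvd_left hg _)

theorem X_mul_derivative_partitionGF :
    X * d⁄dX ℚ partitionGF =
      (PowerSeries.mk fun n => ∑ d ∈ n.divisors, (d : ℚ)) * partitionGF := by
  ext n
  have h := congrArg (Nat.cast : ℕ → ℚ) (Nat.Partition.mul_card_eq_sum_sigma_mul_card n)
  push_cast [sigma_one_apply] at h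
  rw [coeff_X_mul_derivative, coeff_mul, Nat.sum_antidiagonal_eq_sum_range_succ_mk]
  simpa only [partitionGF, coeff_mk] using h

/-- in `ℚ[[x]]`, `log (∑_{n ≥ 0} p(n) xⁿ) = ∑_{n ≥ 1} (σ(n)/n) xⁿ`, where
`σ(n) = ∑_{d ∣ n} d` (the `n = 0` coefficient of the right-hand side being `0`). -/
theorem log_partitionGF :
    logPS partitionGF = PowerSeries.mk fun n => (∑ d ∈ Nat.divisors n, (d : ℚ)) / (n : ℚ) := by
  set S : ℚ⟦X⟧ := PowerSeries.mk fun n => (∑ d ∈ n.divisors, (d : ℚ)) / n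
  have hP : constantCoeff partitionGF = 1 := by simp [partitionGF]
  have hS : d⁄dX ℚ S * partitionGF = d⁄dX ℚ partitionGF := by
    refine mul_left_cancel₀ X_ne_zero ?_
    rw [← mul_assoc, X_mul_derivative_mk_div_natCast _ (by simp), X_mul_derivative_partitionGF]
  have hP0 : partitionGF ≠ 0 := fun h => by simp [h] at hP
  refine derivative.ext (mul_right_cancel₀ hP0 ((derivative_logPS_mul hP).trans hS.symm)) ?_
  simp [logPS, S]
end
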